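/- arXiv:2506.19115 — 2 statements merged into one kernel-verified Lean document; each statement's English description precedes it below -/
import Mathlib

section
/- Let n and k be natural numbers. If T^[t](n) is odd for every t < k, then 2^k divides n + 1 and 2^k·(T^[k](n) + 1) = 3^k·(n + 1). -/
/-- The compact Collatz map: `n / 2` if `n` is even, `(3 n + 1) / 2` if `n` is odd. -/
def T (n : ℕ) : ℕ := if n % 2 = 0 then n / 2 else (3 * n + 1) / 2

lemma two_T_odd {n : ℕ} (hn : Odd n) : 2 * (T n + 1) = 3 * (n + 1) := by
  obtain ⟨m, rfl⟩ := hn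
  unfold T
  rw [if_neg (by omega)]
  omega

theorem stmt_12 (n k : ℕ) (h : ∀ t < k, Odd (T^[t] n)) :
    2 ^ k ∣ (n + 1) ∧ 2 ^ k * (T^[k] n + 1) = 3 ^ k * (n + 1) := by
  induction k generalizing n with
  | zero => simp
  | succ k ih =>
    have hn : Odd n := by simpa using h 0 (Nat.succ_pos k)
    have hT : ∀ t < k, Odd (T^[t] (T n)) := by
      intro t ht
      have := h (t + 1) (by omega)
      rwa [Function.iterate_succ_apply] at this
    obtain ⟨hd, he⟩ := ih (T n) hT
    have key : 2 * (T n + 1) = 3 * (n + 1) := two_T_odd hn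
    constructor
    · have h1 : 2 ^ (k + 1) ∣ 3 * (n + 1) := by
        rw [← key, pow_succ, mul_comm (2^k) 2]
        exact mul_dvd_mul_left 2 hd
      have h2 : Nat.Coprime (2 ^ (k + 1)) 3 := by
        exact (Nat.coprime_primes Nat.prime_two Nat.prime_three |>.mpr (by norm_num)).pow_left _
      exact (Nat.Coprime.dvd_of_dvd_mul_left h2 h1)
    · rw [Function.iterate_succ_apply]
      calc 2 ^ (k + 1) * (T^[k] (T n) + 1) = 2 * (2 ^ k * (T^[k] (T n) + 1)) := by ring
        _ = 2 * (3 ^ k * (T n + 1)) := by rw [he]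
        _ = 3 ^ k * (2 * (T n + 1)) := by ring
        _ = 3 ^ k * (3 * (n + 1)) := by rw [key]
        _ = 3 ^ (k + 1) * (n + 1) := by ring
end

section
/- Let n and k be natural numbers. If T^[t](n) is odd for every t < k, then n ≡ 2^k − 1 (mod 2^k). -/
lemma aux_dvd : ∀ k n : ℕ, (∀ t < k, Odd (T^[t] n)) → 2 ^ k ∣ n + 1 := by
  intro k
  induction k with
  | zero => intro n _; simp
  | succ k ih =>
    intro n h
    have hodd : Odd n := by simpa using h 0 (Nat.succ_pos k)
    have h' : ∀ t < k, Odd (T^[t] (T n)) := by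
      intro t ht
      have := h (t + 1) (by omega)
      simpa [Function.iterate_succ_apply] using this
    have hdvd : 2 ^ k ∣ T n + 1 := ih (T n) h'
    have hmod : n % 2 = 1 := Nat.odd_iff.mp hodd
    have hTn : 2 * T n = 3 * n + 1 := by
      have : (3 * n + 1) % 2 = 0 := by omega
      rw [T, if_neg (by omega)]
      omega
    have h3 : 2 ^ (k + 1) ∣ 3 * (n + 1) := by
      obtain ⟨m, hm⟩ := hdvd
      refine ⟨m, ?_⟩
      have : 2 * (T n + 1) = 3 * (n + 1) := by omega
      rw [← this, hm]; ring
    have hcop : Nat.Coprime (2 ^ (k + 1)) 3 := by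
      exact Nat.Coprime.pow_left _ (by norm_num)
    exact hcop.dvd_of_dvd_mul_left h3

theorem stmt_13 (n k : ℕ) (h : ∀ t < k, Odd (T^[t] n)) :
    n ≡ 2 ^ k - 1 [MOD 2 ^ k] := by
  have hdvd := aux_dvd k n h
  have hpos : (1 : ℕ) ≤ 2 ^ k := Nat.one_le_two_pow
  rw [Nat.modEq_iff_dvd]
  have : ((2 ^ k - 1 : ℕ) : ℤ) = (2 : ℤ) ^ k - 1 := by
    push_cast [hpos]; ring
  rw [this]
  obtain ⟨m, hm⟩ := hdvd
  refine ⟨1 - m, ?_⟩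
  push_cast
  have : (n : ℤ) + 1 = 2 ^ k * m := by exact_mod_cast hm
  linarith
end
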